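/- arXiv:2012.04914 — 8 statements merged into one kernel-verified Lean document; each statement's English description precedes it below -/
import Mathlib

section
/- For every real x ≥ 2, the sum of 1/(e₁ e₂ lcm(e₁,e₂)) over all pairs of positive integers (e₁, e₂) with lcm(e₁, e₂) > x is O((log x)/x). -/
open Finset

lemma tsum_pnat_ofReal_le {f : ℕ → ℝ} (hf : ∀ n, 0 ≤ f n) {c : ℝ}
    (h : ∀ n, ∑ i ∈ Finset.range n, f i ≤ c) :
    ∑' a : ℕ+, ENNReal.ofReal (f a) ≤ ENNReal.ofReal c := by
  rw [ENNReal.tsum_eq_iSup_sum]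
  refine iSup_le fun s => ?_
  rw [← ENNReal.ofReal_sum_of_nonneg (fun _ _ => hf _)]
  refine ENNReal.ofReal_le_ofReal ?_
  have hmap : ∑ a ∈ s, f ↑a
      = ∑ i ∈ s.map ⟨(↑· : ℕ+ → ℕ), PNat.coe_injective⟩, f i := by
    rw [Finset.sum_map]; rfl
  rw [hmap]
  set t := s.map ⟨(↑· : ℕ+ → ℕ), PNat.coe_injective⟩
  calc ∑ i ∈ t, f i ≤ ∑ i ∈ Finset.range (t.sup id + 1), f i := by
        apply Finset.sum_le_sum_of_subset_of_nonneg
        · intro i hi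
          exact Finset.mem_range.mpr (Nat.lt_succ_of_le (Finset.le_sup (f := id) hi))
        · intro i _ _; exact hf i
    _ ≤ c := h _

lemma sum_ite_inv_sq_le {y : ℝ} (hy : 0 ≤ y) (n : ℕ) :
    ∑ i ∈ Finset.range n, (if y < (i : ℝ) then ((i : ℝ) ^ 2)⁻¹ else 0) ≤ 2 / max y 1 := by
  have h1 : ∑ i ∈ Finset.range n, (if y < (i : ℝ) then ((i : ℝ) ^ 2)⁻¹ else 0)
      ≤ ∑ i ∈ Finset.Ioo ⌊y⌋₊ n, ((i : ℝ) ^ 2)⁻¹ := by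
    rw [← Finset.sum_filter]
    apply Finset.sum_le_sum_of_subset_of_nonneg
    · intro i hi
      simp only [Finset.mem_filter, Finset.mem_range] at hi
      exact Finset.mem_Ioo.mpr ⟨(Nat.floor_lt hy).mpr hi.2, hi.1⟩
    · intro i _ _; positivity
  refine h1.trans ((sum_Ioo_inv_sq_le _ _).trans ?_)
  have h2 : max y 1 ≤ (⌊y⌋₊ : ℝ) + 1 := by
    refine max_le (Nat.lt_floor_add_one y).le ?_
    have : (0:ℝ) ≤ (⌊y⌋₊ : ℝ) := Nat.cast_nonneg _
    linarith
  have h3 : 0 < max y 1 := lt_of_lt_of_le one_pos (le_max_right _ _)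
  exact div_le_div_of_nonneg_left (by norm_num) h3 h2

lemma sum_ite_inv_le_log {x : ℝ} (hx : 2 ≤ x) (n : ℕ) :
    ∑ i ∈ Finset.range n, (if (i : ℝ) ≤ x then (i : ℝ)⁻¹ else 0) ≤ 1 + Real.log x := by
  have hfl : 2 ≤ ⌊x⌋₊ := Nat.le_floor (by exact_mod_cast hx)
  have h1 : ∑ i ∈ Finset.range n, (if (i : ℝ) ≤ x then (i : ℝ)⁻¹ else 0)
      ≤ ∑ i ∈ Finset.range n, (if i ∈ Finset.Icc 1 ⌊x⌋₊ then (i : ℝ)⁻¹ else 0) := by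
    apply Finset.sum_le_sum
    intro i _
    rcases Nat.eq_zero_or_pos i with rfl | hi
    · simp
    split_ifs with h2 h3
    · exact le_refl _
    · exact absurd (Finset.mem_Icc.mpr ⟨hi, Nat.le_floor h2⟩) h3
    · positivity
    · exact le_refl _
  refine h1.trans ?_
  rw [Finset.sum_ite_mem]
  have h4 : ∑ i ∈ Finset.range n ∩ Finset.Icc 1 ⌊x⌋₊, (i : ℝ)⁻¹
      ≤ ∑ i ∈ Finset.Icc 1 ⌊x⌋₊, (i : ℝ)⁻¹ := by
    apply Finset.sum_le_sum_of_subset_of_nonneg Finset.inter_subset_right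
    intro i _ _; positivity
  refine h4.trans ?_
  have h5 : ∑ i ∈ Finset.Icc 1 ⌊x⌋₊, (i : ℝ)⁻¹ = (harmonic ⌊x⌋₊ : ℝ) := by
    rw [harmonic_eq_sum_Icc]; push_cast; ring
  rw [h5]
  refine (harmonic_le_one_add_log _).trans ?_
  have hposn : (0:ℝ) < (⌊x⌋₊ : ℝ) := by exact_mod_cast Nat.lt_of_lt_of_le Nat.zero_lt_two hfl
  have := Real.log_le_log hposn (Nat.floor_le (by linarith : (0:ℝ) ≤ x))
  linarith

/-- `∑_{lcm(e₁,e₂) > x} 1/(e₁ e₂ lcm(e₁,e₂)) = O((log x)/x)` with an absolute constant. -/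
theorem sum_lcm_gt_le : ∃ C : ℝ, 0 < C ∧ ∀ x : ℝ, 2 ≤ x →
    ∑' p : ℕ+ × ℕ+,
      (if x < (Nat.lcm p.1 p.2 : ℝ) then
        1 / ((p.1 : ℝ) * (p.2 : ℝ) * (Nat.lcm p.1 p.2 : ℝ)) else 0)
      ≤ C * Real.log x / x := by
  refine ⟨28, by norm_num, fun x hx => ?_⟩
  have hx0 : (0:ℝ) < x := by linarith
  have hlogx : (1:ℝ)/2 ≤ Real.log x := by
    have h2 := Real.log_le_log (by norm_num) hx
    have := Real.log_two_gt_d9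
    linarith
  have hRHS : 0 ≤ 28 * Real.log x / x := by positivity
  set F : ℕ+ × ℕ+ → ℝ := fun p =>
    if x < (Nat.lcm p.1 p.2 : ℝ) then
        1 / ((p.1 : ℝ) * (p.2 : ℝ) * (Nat.lcm p.1 p.2 : ℝ)) else 0 with hF
  have hFnn : ∀ p, 0 ≤ F p := by
    intro p; rw [hF]; dsimp only; split_ifs with h
    · positivity
    · exact le_refl 0
  -- the triple-variable comparison function
  set f₂ : ℕ → ℕ → ℕ → ℝ := fun g a b =>
    if x < (g : ℝ) * a * b then ((g : ℝ) ^ 3 * (a : ℝ) ^ 2 * (b : ℝ) ^ 2)⁻¹ else 0 with hf₂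
  have hf₂nn : ∀ g a b, 0 ≤ f₂ g a b := by
    intro g a b; rw [hf₂]; dsimp only; split_ifs with h
    · positivity
    · exact le_refl 0
  -- the injection
  have hgcdpos : ∀ p : ℕ+ × ℕ+, 0 < Nat.gcd p.1 p.2 :=
    fun p => Nat.gcd_pos_of_pos_left _ p.1.pos
  have hapos : ∀ p : ℕ+ × ℕ+, 0 < (p.1 : ℕ) / Nat.gcd p.1 p.2 :=
    fun p => Nat.div_pos (Nat.le_of_dvd p.1.pos (Nat.gcd_dvd_left _ _)) (hgcdpos p)
  have hbpos : ∀ p : ℕ+ × ℕ+, 0 < (p.2 : ℕ) / Nat.gcd p.1 p.2 :=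
    fun p => Nat.div_pos (Nat.le_of_dvd p.2.pos (Nat.gcd_dvd_right _ _)) (hgcdpos p)
  set i : ℕ+ × ℕ+ → ℕ+ × ℕ+ × ℕ+ := fun p =>
    (⟨Nat.gcd p.1 p.2, hgcdpos p⟩, ⟨(p.1 : ℕ) / Nat.gcd p.1 p.2, hapos p⟩,
      ⟨(p.2 : ℕ) / Nat.gcd p.1 p.2, hbpos p⟩) with hi
  have hda : ∀ p : ℕ+ × ℕ+, (((i p).1 : ℕ) * ((i p).2.1 : ℕ) : ℕ) = (p.1 : ℕ) := by
    intro p; exact Nat.mul_div_cancel' (Nat.gcd_dvd_left _ _)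
  have hdb : ∀ p : ℕ+ × ℕ+, (((i p).1 : ℕ) * ((i p).2.2 : ℕ) : ℕ) = (p.2 : ℕ) := by
    intro p; exact Nat.mul_div_cancel' (Nat.gcd_dvd_right _ _)
  have hlcm : ∀ p : ℕ+ × ℕ+,
      Nat.lcm p.1 p.2 = ((i p).1 : ℕ) * ((i p).2.1 : ℕ) * ((i p).2.2 : ℕ) := by
    intro p
    have h1 := Nat.gcd_mul_lcm (p.1 : ℕ) (p.2 : ℕ)
    refine Nat.eq_of_mul_eq_mul_left (hgcdpos p) ?_
    show ((i p).1 : ℕ) * Nat.lcm p.1 p.2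
        = ((i p).1 : ℕ) * (((i p).1 : ℕ) * ((i p).2.1 : ℕ) * ((i p).2.2 : ℕ))
    calc ((i p).1 : ℕ) * Nat.lcm p.1 p.2 = (p.1 : ℕ) * (p.2 : ℕ) := h1
      _ = (((i p).1 : ℕ) * ((i p).2.1 : ℕ)) * ((((i p).1 : ℕ)) * ((i p).2.2 : ℕ)) := by
          rw [hda, hdb]
      _ = ((i p).1 : ℕ) * (((i p).1 : ℕ) * ((i p).2.1 : ℕ) * ((i p).2.2 : ℕ)) := by
          ring
  have hinj : Function.Injective i := by
    have hleft : Function.LeftInverse (fun t : ℕ+ × ℕ+ × ℕ+ => (t.1 * t.2.1, t.1 * t.2.2)) i := by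
      intro p
      refine Prod.ext ?_ ?_
      · apply PNat.coe_injective; simpa using hda p
      · apply PNat.coe_injective; simpa using hdb p
    exact hleft.injective
  have hFi : ∀ p : ℕ+ × ℕ+, F p = f₂ ((i p).1 : ℕ) ((i p).2.1 : ℕ) ((i p).2.2 : ℕ) := by
    intro p
    set d : ℕ := ((i p).1 : ℕ) with hd'
    set a : ℕ := ((i p).2.1 : ℕ) with ha'
    set b : ℕ := ((i p).2.2 : ℕ) with hb'
    have h3 : ((Nat.lcm p.1 p.2 : ℕ) : ℝ) = (d : ℝ) * a * b := by
      rw [hlcm p]; push_cast; ring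
    have h1 : ((p.1 : ℕ) : ℝ) = (d : ℝ) * a := by
      rw [← hda p]; push_cast; ring
    have h2 : ((p.2 : ℕ) : ℝ) = (d : ℝ) * b := by
      rw [← hdb p]; push_cast; ring
    rw [hF, hf₂]
    dsimp only
    rw [h3, h1, h2]
    refine if_congr Iff.rfl ?_ rfl
    rw [one_div]
    congr 1
    ring
  -- bounding functions
  set c₂ : ℕ → ℕ → ℝ := fun g a =>
    2 / ((g : ℝ) ^ 3 * (a : ℝ) ^ 2) * (max (x / ((g : ℝ) * a)) 1)⁻¹ with hc₂
  set c₁ : ℕ → ℝ := fun g => 14 * Real.log x / ((g : ℝ) ^ 2 * x) with hc₁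
  have hc₂nn : ∀ g a : ℕ, 0 ≤ c₂ g a := by
    intro g a; rw [hc₂]; dsimp only
    refine mul_nonneg (by positivity) (inv_nonneg.mpr ?_)
    exact le_trans zero_le_one (le_max_right _ _)
  have hc₁nn : ∀ g : ℕ, 0 ≤ c₁ g := by
    intro g; rw [hc₁]; dsimp only
    apply div_nonneg (by linarith) (by positivity)
  -- innermost sum (over b)
  have hB : ∀ g a : ℕ+, ∑' b : ℕ+, ENNReal.ofReal (f₂ (g : ℕ) (a : ℕ) b)
      ≤ ENNReal.ofReal (c₂ (g : ℕ) (a : ℕ)) := by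
    intro g a
    have hg0 : (0:ℝ) < ((g : ℕ) : ℝ) := by exact_mod_cast g.pos
    have ha0 : (0:ℝ) < ((a : ℕ) : ℝ) := by exact_mod_cast a.pos
    have hga : (0:ℝ) < ((g : ℕ) : ℝ) * ((a : ℕ) : ℝ) := mul_pos hg0 ha0
    apply tsum_pnat_ofReal_le (fun b => hf₂nn g a b)
    intro n
    have hterm : ∀ b : ℕ, f₂ g a b
        = (((g:ℕ):ℝ) ^ 3 * ((a:ℕ):ℝ) ^ 2)⁻¹
          * (if x / (((g:ℕ):ℝ) * ((a:ℕ):ℝ)) < (b:ℝ) then ((b:ℝ) ^ 2)⁻¹ else 0) := by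
      intro b
      rw [hf₂]; dsimp only
      have hcond : (x < ((g:ℕ):ℝ) * ((a:ℕ):ℝ) * (b:ℝ))
          ↔ (x / (((g:ℕ):ℝ) * ((a:ℕ):ℝ)) < (b:ℝ)) := by
        rw [div_lt_iff₀ hga]
        constructor <;> intro h <;> nlinarith
      rw [if_congr hcond rfl rfl]
      split_ifs with h
      · rw [mul_inv]
      · rw [mul_zero]
    calc ∑ b ∈ Finset.range n, f₂ g a b
        = (((g:ℕ):ℝ) ^ 3 * ((a:ℕ):ℝ) ^ 2)⁻¹
          * ∑ b ∈ Finset.range n,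
            (if x / (((g:ℕ):ℝ) * ((a:ℕ):ℝ)) < (b:ℝ) then ((b:ℝ) ^ 2)⁻¹ else 0) := by
          rw [Finset.mul_sum]; exact Finset.sum_congr rfl fun b _ => hterm b
      _ ≤ (((g:ℕ):ℝ) ^ 3 * ((a:ℕ):ℝ) ^ 2)⁻¹ * (2 / max (x / (((g:ℕ):ℝ) * ((a:ℕ):ℝ))) 1) := by
          refine mul_le_mul_of_nonneg_left ?_ (by positivity)
          exact sum_ite_inv_sq_le (by positivity) n
      _ = c₂ (g : ℕ) (a : ℕ) := by rw [hc₂]; ring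
  -- middle sum (over a)
  have hA : ∀ g : ℕ+, ∑' a : ℕ+, ENNReal.ofReal (c₂ (g : ℕ) (a : ℕ))
      ≤ ENNReal.ofReal (c₁ (g : ℕ)) := by
    intro g
    have hg0 : (0:ℝ) < ((g : ℕ) : ℝ) := by exact_mod_cast g.pos
    have hg1 : (1:ℝ) ≤ ((g : ℕ) : ℝ) := by exact_mod_cast g.one_le
    apply tsum_pnat_ofReal_le (fun a => hc₂nn g a)
    intro n
    have hterm : ∀ a ∈ Finset.range n, c₂ (g : ℕ) a
        ≤ (2 / ((g:ℕ):ℝ) ^ 2) * ((if (a:ℝ) ≤ x then (a:ℝ)⁻¹ else 0) / x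
            + (if x < (a:ℝ) then ((a:ℝ) ^ 2)⁻¹ else 0)) := by
      intro a _
      rw [hc₂]; dsimp only
      by_cases hax : (a : ℝ) ≤ x
      · rw [if_pos hax, if_neg (not_lt.mpr hax), add_zero]
        rcases Nat.eq_zero_or_pos a with rfl | hap
        · norm_num
        have ha0 : (0:ℝ) < (a:ℝ) := by exact_mod_cast hap
        have hga : (0:ℝ) < ((g:ℕ):ℝ) * (a:ℝ) := mul_pos hg0 ha0
        have hM : (max (x / (((g:ℕ):ℝ) * (a:ℝ))) 1)⁻¹ ≤ ((g:ℕ):ℝ) * (a:ℝ) / x := by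
          have h1 : x / (((g:ℕ):ℝ) * (a:ℝ)) ≤ max (x / (((g:ℕ):ℝ) * (a:ℝ))) 1 :=
            le_max_left _ _
          have h2 : (0:ℝ) < x / (((g:ℕ):ℝ) * (a:ℝ)) := by positivity
          calc (max (x / (((g:ℕ):ℝ) * (a:ℝ))) 1)⁻¹ ≤ (x / (((g:ℕ):ℝ) * (a:ℝ)))⁻¹ := by
                exact inv_anti₀ h2 h1
            _ = ((g:ℕ):ℝ) * (a:ℝ) / x := by rw [inv_div]
        calc 2 / (((g:ℕ):ℝ) ^ 3 * (a:ℝ) ^ 2) * (max (x / (((g:ℕ):ℝ) * (a:ℝ))) 1)⁻¹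
            ≤ 2 / (((g:ℕ):ℝ) ^ 3 * (a:ℝ) ^ 2) * (((g:ℕ):ℝ) * (a:ℝ) / x) :=
              mul_le_mul_of_nonneg_left hM (by positivity)
          _ = (2 / ((g:ℕ):ℝ) ^ 2) * ((a:ℝ)⁻¹ / x) := by
              field_simp
      · push_neg at hax
        rw [if_neg (not_le.mpr hax), if_pos hax, zero_div, zero_add]
        have ha0 : (0:ℝ) < (a:ℝ) := lt_trans hx0 hax
        have hM : (max (x / (((g:ℕ):ℝ) * (a:ℝ))) 1)⁻¹ ≤ 1 := by
          exact inv_le_one_of_one_le₀ (le_max_right _ _)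
        calc 2 / (((g:ℕ):ℝ) ^ 3 * (a:ℝ) ^ 2) * (max (x / (((g:ℕ):ℝ) * (a:ℝ))) 1)⁻¹
            ≤ 2 / (((g:ℕ):ℝ) ^ 3 * (a:ℝ) ^ 2) * 1 :=
              mul_le_mul_of_nonneg_left hM (by positivity)
          _ = 2 / (((g:ℕ):ℝ) ^ 3 * (a:ℝ) ^ 2) := mul_one _
          _ ≤ (2 / ((g:ℕ):ℝ) ^ 2) * ((a:ℝ) ^ 2)⁻¹ := by
              rw [div_mul_eq_mul_div, mul_comm, ← div_div]
              apply div_le_div_of_nonneg_left (by positivity) (by positivity)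
              nlinarith
    calc ∑ a ∈ Finset.range n, c₂ (g : ℕ) a
        ≤ ∑ a ∈ Finset.range n, (2 / ((g:ℕ):ℝ) ^ 2)
            * ((if (a:ℝ) ≤ x then (a:ℝ)⁻¹ else 0) / x
              + (if x < (a:ℝ) then ((a:ℝ) ^ 2)⁻¹ else 0)) := Finset.sum_le_sum hterm
      _ = (2 / ((g:ℕ):ℝ) ^ 2)
          * ((∑ a ∈ Finset.range n, (if (a:ℝ) ≤ x then (a:ℝ)⁻¹ else 0)) / x
            + ∑ a ∈ Finset.range n, (if x < (a:ℝ) then ((a:ℝ) ^ 2)⁻¹ else 0)) := by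
          rw [← Finset.mul_sum, Finset.sum_add_distrib, Finset.sum_div]
      _ ≤ (2 / ((g:ℕ):ℝ) ^ 2) * ((1 + Real.log x) / x + 2 / max x 1) := by
          refine mul_le_mul_of_nonneg_left ?_ (by positivity)
          refine add_le_add ?_ (sum_ite_inv_sq_le (by linarith) n)
          gcongr
          exact sum_ite_inv_le_log hx n
      _ ≤ c₁ (g : ℕ) := by
          rw [hc₁]; dsimp only
          rw [max_eq_left (by linarith : (1:ℝ) ≤ x)]
          have hexp : (2 / ((g:ℕ):ℝ) ^ 2) * ((1 + Real.log x) / x + 2 / x)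
              = (2 * (3 + Real.log x)) / (((g:ℕ):ℝ) ^ 2 * x) := by
            field_simp
            ring
          rw [hexp]
          rw [div_le_div_iff_of_pos_right (by positivity)]
          linarith
  -- sum over g
  have hG : ∑' g : ℕ+, ENNReal.ofReal (c₁ (g : ℕ)) ≤ ENNReal.ofReal (28 * Real.log x / x) := by
    apply tsum_pnat_ofReal_le hc₁nn
    intro n
    have hterm : ∀ g : ℕ, c₁ g = (14 * Real.log x / x) * (((g:ℝ) ^ 2)⁻¹) := by
      intro g; rw [hc₁]; ring
    calc ∑ g ∈ Finset.range n, c₁ g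
        = (14 * Real.log x / x) * ∑ g ∈ Finset.range n, ((g:ℝ) ^ 2)⁻¹ := by
          rw [Finset.mul_sum]; exact Finset.sum_congr rfl fun g _ => hterm g
      _ ≤ (14 * Real.log x / x) * 2 := by
          refine mul_le_mul_of_nonneg_left ?_ (by positivity)
          have h1 : ∑ g ∈ Finset.range n, ((g:ℝ) ^ 2)⁻¹
              = ∑ g ∈ Finset.range n, (if (0:ℝ) < (g:ℝ) then ((g:ℝ) ^ 2)⁻¹ else 0) := by
            refine Finset.sum_congr rfl fun g _ => ?_
            rcases Nat.eq_zero_or_pos g with rfl | hg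
            · norm_num
            · rw [if_pos (by exact_mod_cast hg)]
          rw [h1]
          have h2 := sum_ite_inv_sq_le (le_refl (0:ℝ)) n
          rwa [max_eq_right zero_le_one, div_one] at h2
      _ ≤ 28 * Real.log x / x := by
          rw [div_mul_eq_mul_div, div_le_div_iff_of_pos_right hx0]
          linarith
  -- assemble the ENNReal bound
  have key : ∑' p : ℕ+ × ℕ+, ENNReal.ofReal (F p) ≤ ENNReal.ofReal (28 * Real.log x / x) := by
    calc ∑' p : ℕ+ × ℕ+, ENNReal.ofReal (F p)
        = ∑' p : ℕ+ × ℕ+,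
            (fun t : ℕ+ × ℕ+ × ℕ+ => ENNReal.ofReal (f₂ t.1 t.2.1 t.2.2)) (i p) :=
          tsum_congr fun p => by rw [hFi p]
      _ ≤ ∑' t : ℕ+ × ℕ+ × ℕ+, ENNReal.ofReal (f₂ t.1 t.2.1 t.2.2) :=
          ENNReal.tsum_comp_le_tsum_of_injective hinj _
      _ = ∑' (g : ℕ+) (q : ℕ+ × ℕ+), ENNReal.ofReal (f₂ g q.1 q.2) := ENNReal.tsum_prod'
      _ = ∑' (g : ℕ+) (a : ℕ+) (b : ℕ+), ENNReal.ofReal (f₂ g a b) :=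
          tsum_congr fun g => ENNReal.tsum_prod'
      _ ≤ ∑' (g : ℕ+) (a : ℕ+), ENNReal.ofReal (c₂ g a) :=
          ENNReal.tsum_le_tsum fun g => ENNReal.tsum_le_tsum fun a => hB g a
      _ ≤ ∑' (g : ℕ+), ENNReal.ofReal (c₁ g) := ENNReal.tsum_le_tsum fun g => hA g
      _ ≤ ENNReal.ofReal (28 * Real.log x / x) := hG
  -- back to the reals
  by_cases hs : Summable F
  · have heq := ENNReal.ofReal_tsum_of_nonneg hFnn hs
    rw [← heq] at key
    exact (ENNReal.ofReal_le_ofReal_iff hRHS).mp key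
  · rw [tsum_eq_zero_of_not_summable hs]
    exact hRHS
end

section
/- For every real x ≥ 2, ∑_{n ≤ x} φ(n) = (3/π²) x² + O(x log x). -/
/-!
Möbius inversion of `∑_{d ∣ n} φ(d) = n` gives `φ = μ * id`, hence
`∑_{n ≤ x} φ(n) = ∑_{d ≤ x} μ(d) T(⌊x/d⌋)` with `T(m) = m(m+1)/2 = (x/d)²/2 + O(x/d)`.
The error terms sum to `O(x ∑_{d ≤ x} 1/d) = O(x log x)`, and the main terms give
`x²/2 ∑_{d ≤ x} μ(d)/d²`, which differs from `x²/2 · 1/ζ(2) = 3x²/π²` by at most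
`x²/2 ∑_{d > x} 1/d² = O(x)`.
-/

open ArithmeticFunction Finset Filter
open scoped ArithmeticFunction.Moebius

theorem totient_eq_moebius_mul_id_apply (n : ℕ) :
    (n.totient : ℝ) =
      ((μ : ArithmeticFunction ℝ) * (ArithmeticFunction.id : ArithmeticFunction ℝ)) n := by
  rcases n.eq_zero_or_pos with rfl | hn
  · simp
  have hsum : ∀ n : ℕ, n > 0 → ∑ d ∈ n.divisors, (d.totient : ℝ) = n :=
    fun n _ => by exact_mod_cast n.sum_totient
  rw [← sum_eq_iff_sum_mul_moebius_eq.mp hsum n hn, mul_apply]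
  simp

theorem sum_totient_eq_sum_moebius_mul (x : ℝ) :
    ∑ n ∈ Icc 1 ⌊x⌋₊, (n.totient : ℝ) =
      ∑ d ∈ Icc 1 ⌊x⌋₊, (μ d : ℝ) * ∑ m ∈ Icc 1 ⌊x / d⌋₊, (m : ℝ) := by
  have h := sum_Ioc_mul_eq_sum_sum (μ : ArithmeticFunction ℝ) ArithmeticFunction.id ⌊x⌋₊
  simp only [← Icc_add_one_left_eq_Ioc, zero_add, intCoe_apply, natCoe_apply, id_apply] at h
  simp_rw [totient_eq_moebius_mul_id_apply, Nat.floor_div_natCast, h]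

theorem tsum_moebius_div_sq : ∑' n : ℕ, (μ n : ℝ) / (n : ℝ) ^ 2 = 6 / Real.pi ^ 2 := by
  have hL := LSeries_zeta_mul_Lseries_moebius (s := 2) (by norm_num)
  rw [LSeries_zeta_eq_riemannZeta (by norm_num), riemannZeta_two, LSeries] at hL
  have hterm : ∀ n : ℕ,
      LSeries.term (fun n => (μ n : ℂ)) 2 n = (((μ n : ℝ) / (n : ℝ) ^ 2 : ℝ) : ℂ) := by
    intro n
    rcases eq_or_ne n 0 with rfl | hn
    · simp
    · rw [LSeries.term_of_ne_zero hn]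
      push_cast
      rw [Complex.cpow_ofNat]
  rw [tsum_congr hterm, ← Complex.ofReal_tsum] at hL
  have hpi : (Real.pi : ℂ) ≠ 0 := Complex.ofReal_ne_zero.mpr Real.pi_ne_zero
  have hT : ((∑' n : ℕ, (μ n : ℝ) / (n : ℝ) ^ 2 : ℝ) : ℂ) = 6 / (Real.pi : ℂ) ^ 2 := by
    field_simp at hL ⊢
    linear_combination hL
  exact_mod_cast hT

theorem sum_Icc_one_cast_eq (M : ℕ) : ∑ m ∈ Icc 1 M, (m : ℝ) = M * (M + 1) / 2 := by
  induction M with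
  | zero => simp
  | succ M ih => rw [sum_Icc_succ_top (by omega), ih]; push_cast; ring

theorem abs_sum_Icc_floor_sub_sq_div_two_le {y : ℝ} (hy : 1 ≤ y) :
    |∑ m ∈ Icc 1 ⌊y⌋₊, (m : ℝ) - y ^ 2 / 2| ≤ y := by
  have hfloor_le : (⌊y⌋₊ : ℝ) ≤ y := Nat.floor_le (by linarith)
  have hlt_floor : y < ⌊y⌋₊ + 1 := Nat.lt_floor_add_one y
  rw [sum_Icc_one_cast_eq, abs_le]
  constructor <;> nlinarith [(Nat.cast_nonneg ⌊y⌋₊ : (0:ℝ) ≤ _)]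

theorem abs_tsum_sub_sum_Icc_le {f : ℕ → ℝ} (hf : ∀ n, |f n| ≤ ((n : ℝ) ^ 2)⁻¹) (N : ℕ) :
    |∑' n, f n - ∑ n ∈ Icc 1 N, f n| ≤ 2 / (N + 1) := by
  have hsum : Summable f := .of_norm_bounded (Real.summable_nat_pow_inv.mpr one_lt_two) hf
  -- `(0 ^ 2)⁻¹ = 0`, so the bound at `n = 0` forces `f 0 = 0`.
  have hf0 : f 0 = 0 := abs_nonpos_iff.mp (by simpa using hf 0)
  have hrange : ∑ n ∈ Icc 1 N, f n = ∑ n ∈ range (N + 1), f n := by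
    rw [range_eq_Ico, sum_eq_sum_Ico_succ_bot (by omega), hf0, zero_add, zero_add,
      Ico_add_one_right_eq_Icc]
  rw [hrange]
  refine le_of_tendsto ((hsum.hasSum.tendsto_sum_nat.sub_const _).abs)
    (eventually_atTop.mpr ⟨N + 1, fun n hn => ?_⟩)
  rw [← sum_Ico_eq_sub _ hn, Ico_add_one_left_eq_Ioo]
  calc |∑ i ∈ Ioo N n, f i| ≤ ∑ i ∈ Ioo N n, |f i| := abs_sum_le_sum_abs _ _
    _ ≤ ∑ i ∈ Ioo N n, ((i : ℝ) ^ 2)⁻¹ := sum_le_sum fun i _ => hf i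
    _ ≤ 2 / (N + 1) := sum_Ioo_inv_sq_le N n

theorem abs_moebius_div_sq_le (n : ℕ) : |(μ n : ℝ) / (n : ℝ) ^ 2| ≤ ((n : ℝ) ^ 2)⁻¹ := by
  rw [abs_div, abs_of_nonneg (by positivity : (0:ℝ) ≤ (n:ℝ)^2), div_eq_mul_inv]
  exact mul_le_of_le_one_left (by positivity) (by exact_mod_cast abs_moebius_le_one)

theorem abs_sum_moebius_mul_sub_le {x : ℝ} (hx : 1 ≤ x) :
    |∑ d ∈ Icc 1 ⌊x⌋₊, (μ d : ℝ) * (∑ m ∈ Icc 1 ⌊x / d⌋₊, (m : ℝ) - (x / d) ^ 2 / 2)|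
      ≤ x * (1 + Real.log x) := by
  have hterm : ∀ d ∈ Icc 1 ⌊x⌋₊,
      |(μ d : ℝ) * (∑ m ∈ Icc 1 ⌊x / d⌋₊, (m : ℝ) - (x / d) ^ 2 / 2)| ≤ x * (d : ℝ)⁻¹ := by
    intro d hd
    obtain ⟨hd1, hdx⟩ := mem_Icc.mp hd
    have hd_pos : (0 : ℝ) < d := by exact_mod_cast hd1
    have hd_le : (d : ℝ) ≤ x := (Nat.le_floor_iff (by linarith)).mp hdx
    rw [abs_mul, ← div_eq_mul_inv]
    have hμ : |(μ d : ℝ)| ≤ 1 := by exact_mod_cast abs_moebius_le_one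
    exact (mul_le_of_le_one_left (abs_nonneg _) hμ).trans
      (abs_sum_Icc_floor_sub_sq_div_two_le ((one_le_div hd_pos).mpr hd_le))
  have hlog : Real.log ⌊x⌋₊ ≤ Real.log x :=
    Real.log_le_log (by exact_mod_cast Nat.floor_pos.mpr hx) (Nat.floor_le (by linarith))
  calc _ ≤ ∑ d ∈ Icc 1 ⌊x⌋₊, x * (d : ℝ)⁻¹ := (abs_sum_le_sum_abs _ _).trans (sum_le_sum hterm)
    _ = x * harmonic ⌊x⌋₊ := by rw [← mul_sum, harmonic_eq_sum_Icc]; push_cast; rfl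
    _ ≤ x * (1 + Real.log x) := by
      gcongr
      exact (harmonic_le_one_add_log _).trans (by linarith)

/-- `∑_{n ≤ x} φ(n) = (3/π²) x² + O(x log x)` for `x ≥ 2`, absolute constant. -/
theorem sum_totient_asymptotic : ∃ C : ℝ, 0 < C ∧ ∀ x : ℝ, 2 ≤ x →
    |(∑ n ∈ Finset.Icc 1 ⌊x⌋₊, (Nat.totient n : ℝ)) - 3 / Real.pi ^ 2 * x ^ 2|
      ≤ C * x * Real.log x := by
  refine ⟨4, by norm_num, fun x hx => ?_⟩
  set P := ∑ d ∈ Icc 1 ⌊x⌋₊, (μ d : ℝ) / (d : ℝ) ^ 2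
  have hsplit : ∑ n ∈ Icc 1 ⌊x⌋₊, (n.totient : ℝ) - 3 / Real.pi ^ 2 * x ^ 2 =
      ∑ d ∈ Icc 1 ⌊x⌋₊, (μ d : ℝ) * (∑ m ∈ Icc 1 ⌊x / d⌋₊, (m : ℝ) - (x / d) ^ 2 / 2)
        - x ^ 2 / 2 * (6 / Real.pi ^ 2 - P) := by
    have hmain : ∑ d ∈ Icc 1 ⌊x⌋₊, (μ d : ℝ) * ((x / d) ^ 2 / 2) = x ^ 2 / 2 * P := by
      rw [mul_sum]
      exact sum_congr rfl fun d _ => by ring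
    rw [sum_totient_eq_sum_moebius_mul]
    simp only [mul_sub, sum_sub_distrib, hmain]
    ring
  have htail : |x ^ 2 / 2 * (6 / Real.pi ^ 2 - P)| ≤ x := by
    have hP := abs_tsum_sub_sum_Icc_le abs_moebius_div_sq_le ⌊x⌋₊
    rw [tsum_moebius_div_sq] at hP
    have hx_lt : x < ⌊x⌋₊ + 1 := Nat.lt_floor_add_one x
    rw [abs_mul, abs_of_nonneg (by positivity)]
    calc _ ≤ x ^ 2 / 2 * (2 / (⌊x⌋₊ + 1)) := by gcongr
      _ ≤ x := by
        rw [mul_div_assoc', div_le_iff₀ (by positivity)]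
        nlinarith
  have hlog : 2 ≤ 3 * Real.log x := by
    have := Real.log_le_log (by norm_num) hx
    linarith [Real.log_two_gt_d9]
  rw [hsplit]
  calc _ ≤ _ + _ := abs_sub _ _
    _ ≤ x * (1 + Real.log x) + x := add_le_add (abs_sum_moebius_mul_sub_le (by linarith)) htail
    _ ≤ 4 * x * Real.log x := by nlinarith
end

section
/- For all coprime-free positive integers a₁, a₂, the double series ∑_{d₁,d₂ ≥ 1} μ(d₁)μ(d₂) / (d₁ d₂ · lcm(d₁/gcd(a₁,d₁), d₂/gcd(a₂,d₂))) converges absolutely. -/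
open ArithmeticFunction
open scoped ArithmeticFunction.Moebius

/-! Since `d ≤ a · (d / (a, d))` and the lcm `L` of the two quotients dominates both of them,
`d₁ d₂ ≤ a₁ a₂ L²`. Hence the `(d₁, d₂)` term is at most `√(a₁ a₂) (d₁ d₂)^(-3/2)`, a product
of two convergent `p`-series. -/

theorem Nat.le_mul_div_gcd {a : ℕ} (ha : 0 < a) (d : ℕ) : d ≤ a * (d / Nat.gcd a d) :=
  calc d = Nat.gcd a d * (d / Nat.gcd a d) := (Nat.mul_div_cancel' (Nat.gcd_dvd_right a d)).symm
    _ ≤ a * (d / Nat.gcd a d) := Nat.mul_le_mul_right _ (Nat.gcd_le_left d ha)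

theorem Nat.mul_le_lcm_sq {x y : ℕ} (hx : 0 < x) (hy : 0 < y) : x * y ≤ Nat.lcm x y ^ 2 := by
  have hL : 0 < Nat.lcm x y := Nat.lcm_pos hx hy
  rw [sq]
  exact Nat.mul_le_mul (Nat.le_of_dvd hL (Nat.dvd_lcm_left x y))
    (Nat.le_of_dvd hL (Nat.dvd_lcm_right x y))

theorem Nat.div_gcd_pos (a : ℕ) {d : ℕ} (hd : 0 < d) : 0 < d / Nat.gcd a d :=
  Nat.div_pos (Nat.gcd_le_right _ hd) (Nat.gcd_pos_of_pos_right _ hd)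

theorem Nat.mul_le_mul_lcm_sq_div_gcd {a₁ a₂ : ℕ} (ha₁ : 0 < a₁) (ha₂ : 0 < a₂) {d₁ d₂ : ℕ}
    (hd₁ : 0 < d₁) (hd₂ : 0 < d₂) :
    d₁ * d₂ ≤ a₁ * a₂ * Nat.lcm (d₁ / Nat.gcd a₁ d₁) (d₂ / Nat.gcd a₂ d₂) ^ 2 :=
  calc d₁ * d₂ ≤ (a₁ * (d₁ / Nat.gcd a₁ d₁)) * (a₂ * (d₂ / Nat.gcd a₂ d₂)) :=
        Nat.mul_le_mul (Nat.le_mul_div_gcd ha₁ d₁) (Nat.le_mul_div_gcd ha₂ d₂)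
    _ = a₁ * a₂ * ((d₁ / Nat.gcd a₁ d₁) * (d₂ / Nat.gcd a₂ d₂)) := by ring
    _ ≤ _ := Nat.mul_le_mul_left _ <|
        Nat.mul_le_lcm_sq (Nat.div_gcd_pos a₁ hd₁) (Nat.div_gcd_pos a₂ hd₂)

theorem Real.one_div_mul_le_sqrt_mul_rpow {D L A : ℝ} (hD : 0 < D) (hL : 0 < L)
    (h : D ≤ A * L ^ 2) : 1 / (D * L) ≤ √A * D ^ (-(3 / 2 : ℝ)) := by
  have hA : 0 ≤ A := by nlinarith [sq_nonneg L]
  have hsqrt : √D ≤ √A * L := by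
    rw [← Real.sqrt_sq hL.le, ← Real.sqrt_mul hA]
    exact Real.sqrt_le_sqrt h
  have hrpow : D ^ (-(3 / 2 : ℝ)) = (D * √D)⁻¹ := by
    rw [Real.rpow_neg hD.le, show (3 / 2 : ℝ) = 1 + 1 / 2 by norm_num, Real.rpow_add hD,
      Real.rpow_one, ← Real.sqrt_eq_rpow]
  have hsD : 0 < √D := Real.sqrt_pos.2 hD
  rw [hrpow, ← div_eq_mul_inv, div_le_div_iff₀ (by positivity) (by positivity)]
  nlinarith [mul_le_mul_of_nonneg_left hsqrt hD.le]

theorem summable_pnat_prod_rpow_neg_three_halves :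
    Summable fun p : ℕ+ × ℕ+ => ((p.1 : ℝ) * p.2) ^ (-(3 / 2 : ℝ)) := by
  have hs : Summable fun n : ℕ+ => (n : ℝ) ^ (-(3 / 2 : ℝ)) :=
    (Real.summable_nat_rpow.2 (by norm_num)).comp_injective PNat.coe_injective
  refine (hs.mul_of_nonneg hs (fun _ => by positivity) (fun _ => by positivity)).congr ?_
  intro p
  exact (Real.mul_rpow (by positivity) (by positivity)).symm

theorem abs_moebius_mul_moebius_le_one (m n : ℕ) : |(μ m : ℝ) * μ n| ≤ 1 := by
  rw [abs_mul]
  exact_mod_cast mul_le_one₀ abs_moebius_le_one (abs_nonneg _) abs_moebius_le_one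

/-- The double series `∑_{d₁,d₂ ≥ 1} μ(d₁)μ(d₂)/(d₁ d₂ [d₁/(a₁,d₁), d₂/(a₂,d₂)])`
converges absolutely, for all positive integers `a₁, a₂`. -/
theorem C1_series_abs_convergent (a₁ a₂ : ℕ) (ha₁ : 0 < a₁) (ha₂ : 0 < a₂) :
    Summable fun p : ℕ+ × ℕ+ =>
      |((μ p.1 : ℝ) * (μ p.2 : ℝ)) /
        ((p.1 : ℝ) * (p.2 : ℝ) *
          (Nat.lcm ((p.1 : ℕ) / Nat.gcd a₁ p.1) ((p.2 : ℕ) / Nat.gcd a₂ p.2) : ℝ))| := by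
  refine (summable_pnat_prod_rpow_neg_three_halves.mul_left √(a₁ * a₂ : ℝ)).of_nonneg_of_le
    (fun _ => abs_nonneg _) ?_
  rintro ⟨d₁, d₂⟩
  dsimp only
  set L := Nat.lcm ((d₁ : ℕ) / Nat.gcd a₁ d₁) ((d₂ : ℕ) / Nat.gcd a₂ d₂)
  have hL : (0 : ℝ) < L := by
    exact_mod_cast Nat.lcm_pos (Nat.div_gcd_pos a₁ d₁.pos) (Nat.div_gcd_pos a₂ d₂.pos)
  have hprod : ((d₁ : ℝ) * d₂) ≤ (a₁ * a₂ : ℝ) * (L : ℝ) ^ 2 := by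
    exact_mod_cast Nat.mul_le_mul_lcm_sq_div_gcd ha₁ ha₂ d₁.pos d₂.pos
  rw [abs_div, abs_of_pos (a := (d₁ : ℝ) * d₂ * L) (by positivity)]
  calc _ ≤ 1 / ((d₁ : ℝ) * d₂ * L) :=
        div_le_div_of_nonneg_right (abs_moebius_mul_moebius_le_one d₁ d₂) (by positivity)
    _ ≤ _ := Real.one_div_mul_le_sqrt_mul_rpow (by positivity) hL hprod
end

section
/- For every finite set A of positive integers, the degree of the least common multiple (in ℤ[q]) of the polynomials [k]_q = 1 + q + ⋯ + q^{k−1} for k ∈ A equals ∑_{1 < d ≤ max(A)} φ(d) · I_A(d), where I_A(d) = 1 if d divides some element of A and I_A(d) = 0 otherwise. -/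
open Polynomial

/-- For a finite set `A` of positive integers, the degree of `lcm{[k]_q : k ∈ A}`
equals `∑_{1 < d ≤ max A} φ(d) I_A(d)`, where `I_A(d)` indicates that `d` divides
some element of `A`. -/
theorem degree_lcm_q_analog (A : Finset ℕ) (hA : ∀ k ∈ A, 0 < k) :
    (A.lcm fun k => ∑ i ∈ Finset.range k, (X : ℚ[X]) ^ i).natDegree
      = ∑ d ∈ Finset.Icc 2 (A.sup _root_.id),
          Nat.totient d * (if ∃ k ∈ A, d ∣ k then 1 else 0) := by
  set S := (Finset.Icc 2 (A.sup _root_.id)).filter (fun d => ∃ k ∈ A, d ∣ k) with hS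
  set P := ∏ d ∈ S, cyclotomic d ℚ with hP
  have hfk : ∀ k ∈ A, (∑ i ∈ Finset.range k, (X : ℚ[X]) ^ i)
      = ∏ d ∈ k.divisors.erase 1, cyclotomic d ℚ := fun k hk =>
    (prod_cyclotomic_eq_geom_sum (hA k hk) ℚ).symm
  have hPne : P ≠ 0 := Finset.prod_ne_zero_iff.2 fun d _ => cyclotomic_ne_zero d ℚ
  have hlcm_dvd : (A.lcm fun k => ∑ i ∈ Finset.range k, (X : ℚ[X]) ^ i) ∣ P := by
    apply Finset.lcm_dvd
    intro k hk
    rw [hfk k hk]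
    apply Finset.prod_dvd_prod_of_subset
    intro d hd
    simp only [Finset.mem_erase, Nat.mem_divisors] at hd
    simp only [hS, Finset.mem_filter, Finset.mem_Icc]
    have hd0 : 0 < d := Nat.pos_of_dvd_of_pos hd.2.1 (hA k hk)
    refine ⟨⟨by omega, ?_⟩, ⟨k, hk, hd.2.1⟩⟩
    exact le_trans (Nat.le_of_dvd (hA k hk) hd.2.1) (Finset.le_sup (f := _root_.id) hk)
  have hdvd_lcm : P ∣ A.lcm fun k => ∑ i ∈ Finset.range k, (X : ℚ[X]) ^ i := by
    apply Finset.prod_dvd_of_coprime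
    · intro d _ e _ hde
      exact cyclotomic.isCoprime_rat hde
    · intro d hd
      simp only [hS, Finset.mem_filter, Finset.mem_Icc] at hd
      obtain ⟨⟨h2, _⟩, k, hk, hdk⟩ := hd
      refine dvd_trans ?_ (Finset.dvd_lcm hk)
      rw [hfk k hk]
      exact Finset.dvd_prod_of_mem _ (by
        simp only [Finset.mem_erase, Nat.mem_divisors]
        exact ⟨by omega, hdk, (hA k hk).ne'⟩)
  have hLne : (A.lcm fun k => ∑ i ∈ Finset.range k, (X : ℚ[X]) ^ i) ≠ 0 := by
    intro h
    rw [h, zero_dvd_iff] at hlcm_dvd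
    exact hPne hlcm_dvd
  have hdeg : (A.lcm fun k => ∑ i ∈ Finset.range k, (X : ℚ[X]) ^ i).natDegree
      = P.natDegree :=
    Nat.le_antisymm (Polynomial.natDegree_le_of_dvd hlcm_dvd hPne)
      (Polynomial.natDegree_le_of_dvd hdvd_lcm hLne)
  rw [hdeg, hP, Polynomial.natDegree_prod _ _ (fun d _ => cyclotomic_ne_zero d ℚ)]
  simp only [natDegree_cyclotomic]
  rw [hS, Finset.sum_filter]
  refine Finset.sum_congr rfl fun d _ => ?_
  split <;> simp
end

section
/- Let A be a random subset of {1,…,n} with each element included independently with probability α, β = 1 − α. For positive integers d₁, d₂, E[I_A(d₁) I_A(d₂)] = 1 − β^⌊n/d₁⌋ − β^⌊n/d₂⌋ + β^{⌊n/d₁⌋ + ⌊n/d₂⌋ − ⌊n/lcm(d₁,d₂)⌋}. -/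
/-- Probability of drawing exactly the subset `A ⊆ {1,…,n}` in the model `B(n,α)`. -/
noncomputable def prob (n : ℕ) (α : ℝ) (A : Finset ℕ) : ℝ :=
  α ^ A.card * (1 - α) ^ (n - A.card)

/-!
`I_A(d₁) I_A(d₂) = I_A(d₁) + I_A(d₂) - [A meets D₁ ∪ D₂]`, where `Dᵢ` is the set of multiples
of `dᵢ` in `{1,…,n}`. A set misses a fixed `U ⊆ {1,…,n}` with probability `β^|U|`, and
`|D₁ ∪ D₂| = ⌊n/d₁⌋ + ⌊n/d₂⌋ - ⌊n/[d₁,d₂]⌋` by inclusion–exclusion, since `D₁ ∩ D₂` is the set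
of multiples of `[d₁,d₂]`.
-/

open Finset

lemma sum_prob_powerset_filter_disjoint {n : ℕ} (α : ℝ) {S U : Finset ℕ} (hS : #S = n)
    (hU : U ⊆ S) :
    ∑ A ∈ S.powerset with Disjoint A U, prob n α A = (1 - α) ^ #U := by
  have hfilter : {A ∈ S.powerset | Disjoint A U} = (S \ U).powerset := by
    ext A
    simp [subset_sdiff]
  have hcard : #(S \ U) + #U = n := by
    rw [card_sdiff_of_subset hU, ← hS]
    exact Nat.sub_add_cancel (card_le_card hU)
  calc ∑ A ∈ S.powerset with Disjoint A U, prob n α A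
      = ∑ A ∈ (S \ U).powerset, (1 - α) ^ #U * (α ^ #A * (1 - α) ^ (#(S \ U) - #A)) := by
        rw [hfilter]
        refine sum_congr rfl fun A hA => ?_
        have hA : #A ≤ #(S \ U) := card_le_card (mem_powerset.1 hA)
        rw [prob, show n - #A = #U + (#(S \ U) - #A) by omega, pow_add]
        ring
    _ = (1 - α) ^ #U := by
        rw [← mul_sum, sum_pow_mul_eq_add_pow]
        simp

lemma sum_prob_mul_indicator_exists {n : ℕ} (α : ℝ) {S : Finset ℕ} (hS : #S = n)
    (P : ℕ → Prop) [DecidablePred P] :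
    ∑ A ∈ S.powerset, prob n α A * (if ∃ k ∈ A, P k then 1 else 0)
      = 1 - (1 - α) ^ #{k ∈ S | P k} := by
  have htotal : ∑ A ∈ S.powerset, prob n α A = 1 := by
    simpa using sum_prob_powerset_filter_disjoint α hS (empty_subset S)
  have hsummand : ∀ A ∈ S.powerset, prob n α A * (if ∃ k ∈ A, P k then 1 else 0)
      = prob n α A - if Disjoint A {k ∈ S | P k} then prob n α A else 0 := by
    intro A hA
    have hdisj : Disjoint A {k ∈ S | P k} ↔ ¬ ∃ k ∈ A, P k := by
      simp only [disjoint_left, mem_filter, not_and, not_exists]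
      exact ⟨fun h k hk => h hk (mem_powerset.1 hA hk), fun h k hk _ => h k hk⟩
    by_cases h : ∃ k ∈ A, P k <;> simp [h, hdisj]
  rw [sum_congr rfl hsummand, sum_sub_distrib, ← sum_filter, htotal,
    sum_prob_powerset_filter_disjoint α hS (filter_subset _ S)]

lemma ite_exists_mul_ite_exists {ι R : Type*} [Ring R] (A : Finset ι) (P Q : ι → Prop)
    [DecidablePred P] [DecidablePred Q] :
    (if ∃ k ∈ A, P k then (1 : R) else 0) * (if ∃ k ∈ A, Q k then 1 else 0)
      = (if ∃ k ∈ A, P k then 1 else 0) + (if ∃ k ∈ A, Q k then 1 else 0)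
        - (if ∃ k ∈ A, P k ∨ Q k then 1 else 0) := by
  have hor : (∃ k ∈ A, P k ∨ Q k) ↔ (∃ k ∈ A, P k) ∨ ∃ k ∈ A, Q k := by
    simp only [and_or_left, exists_or]
  simp only [hor]
  by_cases hP : ∃ k ∈ A, P k <;> by_cases hQ : ∃ k ∈ A, Q k <;> simp [hP, hQ]

lemma card_filter_dvd_Icc (n d : ℕ) : #{k ∈ Icc 1 n | d ∣ k} = n / d := by
  rw [show Icc 1 n = Ioc 0 n from Icc_add_one_left_eq_Ioc 0 n]
  exact Nat.Ioc_filter_dvd_card_eq_div n d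

lemma card_filter_dvd_or_dvd_Icc (n d₁ d₂ : ℕ) :
    #{k ∈ Icc 1 n | d₁ ∣ k ∨ d₂ ∣ k} = n / d₁ + n / d₂ - n / Nat.lcm d₁ d₂ := by
  have h := card_union_add_card_inter {k ∈ Icc 1 n | d₁ ∣ k} {k ∈ Icc 1 n | d₂ ∣ k}
  rw [← filter_or, ← filter_and] at h
  simp only [← Nat.lcm_dvd_iff, card_filter_dvd_Icc] at h
  omega

theorem expectation_indicator_mul_general (n : ℕ) (α : ℝ)
    (d₁ d₂ : ℕ) :
    ∑ A ∈ (Finset.Icc 1 n).powerset,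
        prob n α A * ((if ∃ k ∈ A, d₁ ∣ k then 1 else 0) *
          (if ∃ k ∈ A, d₂ ∣ k then 1 else 0))
      = 1 - (1 - α) ^ (n / d₁) - (1 - α) ^ (n / d₂)
          + (1 - α) ^ (n / d₁ + n / d₂ - n / Nat.lcm d₁ d₂) := by
  have hcard : #(Icc 1 n) = n := by simp
  simp only [ite_exists_mul_ite_exists, mul_add, mul_sub, sum_add_distrib, sum_sub_distrib,
    sum_prob_mul_indicator_exists α hcard, card_filter_dvd_Icc, card_filter_dvd_or_dvd_Icc]
  ring

/-- `E[I_A(d₁) I_A(d₂)] = 1 − β^⌊n/d₁⌋ − β^⌊n/d₂⌋ + β^{⌊n/d₁⌋+⌊n/d₂⌋−⌊n/[d₁,d₂]⌋}`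
in the model `B(n,α)`, where `β = 1 − α`. -/
theorem expectation_indicator_mul (n : ℕ) (α : ℝ) (hα0 : 0 ≤ α) (hα1 : α ≤ 1)
    (d₁ d₂ : ℕ) (hd₁ : 0 < d₁) (hd₂ : 0 < d₂) :
    ∑ A ∈ (Finset.Icc 1 n).powerset,
        prob n α A * ((if ∃ k ∈ A, d₁ ∣ k then 1 else 0) *
          (if ∃ k ∈ A, d₂ ∣ k then 1 else 0))
      = 1 - (1 - α) ^ (n / d₁) - (1 - α) ^ (n / d₂)
          + (1 - α) ^ (n / d₁ + n / d₂ - n / Nat.lcm d₁ d₂) :=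
  expectation_indicator_mul_general n α d₁ d₂
end

section
/- Let A be a random subset of {1,…,n} with independent inclusion probability α and β = 1 − α. Then E[deg lcm([A]_q)] = ∑_{1 < d ≤ n} φ(d)(1 − β^⌊n/d⌋). -/
open Polynomial

/-- `X(A) = deg lcm([A]_q)`. -/
noncomputable def degLcm (A : Finset ℕ) : ℕ :=
  (A.lcm fun k => ∑ i ∈ Finset.range k, (X : ℚ[X]) ^ i).natDegree

/-!
Since `[k]_q = ∏_{1 < d ∣ k} Φ_d` and distinct cyclotomic polynomials are coprime, `lcm([A]_q)`
is the product of `Φ_d` over all `d > 1` dividing some element of `A`; its degree is therefore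
`∑ φ(d)` over those `d`. By linearity of expectation the expected degree is
`∑_{1 < d ≤ n} φ(d) · P(d divides some element of A)`, and `A` misses the `⌊n/d⌋` multiples of `d`
in `{1,…,n}` with probability `β^⌊n/d⌋`.
-/

open Finset
open scoped Nat

theorem Finset.associated_lcm_prod_biUnion {R ι κ : Type*} [CommRing R] [IsDomain R]
    [NormalizedGCDMonoid R] [DecidableEq ι] (A : Finset κ) (S : κ → Finset ι) (f : ι → R)
    (hf : (A.biUnion S : Set ι).Pairwise (Function.onFun IsCoprime f)) :
    Associated (A.lcm fun k => ∏ i ∈ S k, f i) (∏ i ∈ A.biUnion S, f i) := by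
  refine associated_of_dvd_dvd (lcm_dvd fun k hk => ?_) (prod_dvd_of_coprime hf fun i hi => ?_)
  · exact prod_dvd_prod_of_subset _ _ _ (subset_biUnion_of_mem S hk)
  · obtain ⟨k, hk, hik⟩ := mem_biUnion.mp hi
    exact (dvd_prod_of_mem f hik).trans (dvd_lcm hk)

theorem degLcm_eq_sum_totient (A : Finset ℕ) (hA : 0 ∉ A) :
    degLcm A = ∑ d ∈ A.biUnion fun k => k.divisors.erase 1, φ d := by
  have hgeom : ∀ k ∈ A,
      ∑ i ∈ range k, (X : ℚ[X]) ^ i = ∏ d ∈ k.divisors.erase 1, cyclotomic d ℚ := fun k hk =>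
    (prod_cyclotomic_eq_geom_sum (Nat.pos_of_ne_zero (ne_of_mem_of_not_mem hk hA)) ℚ).symm
  have hassoc := associated_lcm_prod_biUnion A (fun k => k.divisors.erase 1) (cyclotomic · ℚ)
    fun _ _ _ _ hne => cyclotomic.isCoprime_rat hne
  rw [degLcm, lcm_congr rfl hgeom,
    natDegree_eq_of_degree_eq (degree_eq_degree_of_associated hassoc),
    natDegree_prod _ _ fun d _ => cyclotomic_ne_zero d ℚ]
  exact sum_congr rfl fun d _ => natDegree_cyclotomic d ℚ

theorem biUnion_divisors_erase_one_eq_filter {n : ℕ} {A : Finset ℕ} (hA : A ⊆ Icc 1 n) :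
    (A.biUnion fun k => k.divisors.erase 1) = {d ∈ Icc 2 n | ∃ k ∈ A, d ∣ k} := by
  ext d
  simp only [mem_biUnion, mem_erase, Nat.mem_divisors, mem_filter, mem_Icc]
  constructor
  · rintro ⟨k, hk, hd1, hdk, hk0⟩
    have hkn := (mem_Icc.mp (hA hk)).2
    have hdpos := Nat.pos_of_dvd_of_pos hdk (Nat.pos_of_ne_zero hk0)
    exact ⟨⟨by omega, (Nat.le_of_dvd (Nat.pos_of_ne_zero hk0) hdk).trans hkn⟩, k, hk, hdk⟩
  · rintro ⟨⟨hd2, -⟩, k, hk, hdk⟩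
    exact ⟨k, hk, by omega, hdk, by have := (mem_Icc.mp (hA hk)).1; omega⟩

theorem sum_prob_powerset {n : ℕ} (α : ℝ) {s : Finset ℕ} (hs : #s ≤ n) :
    ∑ A ∈ s.powerset, prob n α A = (1 - α) ^ (n - #s) := by
  have hsplit : ∀ A ∈ s.powerset,
      prob n α A = (1 - α) ^ (n - #s) * (α ^ #A * (1 - α) ^ (#s - #A)) := by
    intro A hA
    have hAs := card_le_card (mem_powerset.mp hA)
    rw [prob, show n - #A = (n - #s) + (#s - #A) by omega, pow_add]
    ring
  rw [sum_congr rfl hsplit, ← mul_sum, sum_pow_mul_eq_add_pow]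
  simp

theorem sum_prob_not_disjoint {n : ℕ} (α : ℝ) {t : Finset ℕ} (ht : t ⊆ Icc 1 n) :
    ∑ A ∈ (Icc 1 n).powerset with ¬Disjoint A t, prob n α A = 1 - (1 - α) ^ #t := by
  have hcard : #(Icc 1 n) = n := by simp
  have htn : #t ≤ n := hcard ▸ card_le_card ht
  have hdisj : {A ∈ (Icc 1 n).powerset | Disjoint A t} = (Icc 1 n \ t).powerset := by
    ext A
    simp only [mem_filter, mem_powerset, subset_sdiff]
  have htotal := sum_prob_powerset α hcard.le
  have hmiss := sum_prob_powerset (s := Icc 1 n \ t) α (hcard ▸ card_le_card sdiff_subset)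
  rw [← hdisj, card_sdiff_of_subset ht, hcard, Nat.sub_sub_self htn] at hmiss
  rw [← sum_filter_not_add_sum_filter _ (Disjoint · t), hmiss, hcard, Nat.sub_self, pow_zero]
    at htotal
  linarith

theorem sum_prob_exists_dvd (n d : ℕ) (α : ℝ) :
    ∑ A ∈ (Icc 1 n).powerset with ∃ k ∈ A, d ∣ k, prob n α A = 1 - (1 - α) ^ (n / d) := by
  have hmult : #{k ∈ Icc 1 n | d ∣ k} = n / d := Nat.Ioc_filter_dvd_card_eq_div n d
  rw [← hmult, ← sum_prob_not_disjoint α (filter_subset _ _)]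
  refine sum_congr (filter_congr fun A hA => ?_) fun _ _ => rfl
  simp only [not_disjoint_iff, mem_filter]
  exact ⟨fun ⟨k, hk, hdk⟩ => ⟨k, hk, mem_powerset.mp hA hk, hdk⟩,
    fun ⟨k, hk, _, hdk⟩ => ⟨k, hk, hdk⟩⟩

theorem expectation_degLcm_general (n : ℕ) (α : ℝ) :
    ∑ A ∈ (Finset.Icc 1 n).powerset, prob n α A * (degLcm A : ℝ)
      = ∑ d ∈ Finset.Icc 2 n, (Nat.totient d : ℝ) * (1 - (1 - α) ^ (n / d)) := by
  have hdeg : ∀ A ∈ (Icc 1 n).powerset,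
      (degLcm A : ℝ) = ∑ d ∈ Icc 2 n with ∃ k ∈ A, d ∣ k, (φ d : ℝ) := by
    intro A hA
    have hAn := mem_powerset.mp hA
    have hA0 : 0 ∉ A := fun h0 => by simpa using hAn h0
    rw [degLcm_eq_sum_totient A hA0, biUnion_divisors_erase_one_eq_filter hAn, Nat.cast_sum]
  calc ∑ A ∈ (Icc 1 n).powerset, prob n α A * (degLcm A : ℝ)
      = ∑ A ∈ (Icc 1 n).powerset, ∑ d ∈ Icc 2 n with ∃ k ∈ A, d ∣ k, prob n α A * φ d := by
        refine sum_congr rfl fun A hA => ?_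
        rw [hdeg A hA, mul_sum]
    _ = ∑ d ∈ Icc 2 n, ∑ A ∈ (Icc 1 n).powerset with ∃ k ∈ A, d ∣ k, prob n α A * φ d :=
        sum_comm' fun A d => by simp only [mem_filter]; tauto
    _ = ∑ d ∈ Icc 2 n, (φ d : ℝ) * (1 - (1 - α) ^ (n / d)) := by
        simp_rw [← sum_mul, sum_prob_exists_dvd, mul_comm]

/-- `E[deg lcm([A]_q)] = ∑_{1 < d ≤ n} φ(d)(1 − β^⌊n/d⌋)` in the model `B(n,α)`. -/
theorem expectation_degLcm (n : ℕ) (α : ℝ) (hα0 : 0 ≤ α) (hα1 : α ≤ 1) :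
    ∑ A ∈ (Finset.Icc 1 n).powerset, prob n α A * (degLcm A : ℝ)
      = ∑ d ∈ Finset.Icc 2 n, (Nat.totient d : ℝ) * (1 - (1 - α) ^ (n / d)) :=
  expectation_degLcm_general n α
end

section
/- Let A be a random subset of {1,…,n} with independent inclusion probability α, β = 1 − α, and X = deg lcm([A]_q). Then V[X] = ∑_{1 < d₁, d₂ ≤ n} φ(d₁)φ(d₂) β^{⌊n/d₁⌋ + ⌊n/d₂⌋ − ⌊n/lcm(d₁,d₂)⌋} (1 − β^{⌊n/lcm(d₁,d₂)⌋}). -/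
open Polynomial

def Mset (n d : ℕ) : Finset ℕ := (Finset.Icc 1 n).filter (fun k => d ∣ k)

lemma Mset_subset (n d : ℕ) : Mset n d ⊆ Finset.Icc 1 n := Finset.filter_subset _ _

lemma Mset_card (n d : ℕ) : (Mset n d).card = n / d := by
  rw [Mset, show Finset.Icc 1 n = Finset.Ioc 0 n from Finset.Icc_add_one_left_eq_Ioc 0 n]
  exact Nat.Ioc_filter_dvd_card_eq_div n d

lemma Mset_inter (n d₁ d₂ : ℕ) : Mset n d₁ ∩ Mset n d₂ = Mset n (Nat.lcm d₁ d₂) := by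
  ext k
  simp only [Mset, Finset.mem_inter, Finset.mem_filter, Nat.lcm_dvd_iff]
  tauto

lemma Mset_lcm_subset (n d₁ d₂ : ℕ) : Mset n (Nat.lcm d₁ d₂) ⊆ Mset n d₁ := by
  intro k hk
  simp only [Mset, Finset.mem_filter] at hk ⊢
  exact ⟨hk.1, (Nat.dvd_lcm_left d₁ d₂).trans hk.2⟩

lemma div_lcm_le (n d₁ d₂ : ℕ) : n / Nat.lcm d₁ d₂ ≤ n / d₁ := by
  rw [← Mset_card, ← Mset_card]
  exact Finset.card_le_card (Mset_lcm_subset n d₁ d₂)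

lemma Mset_union_card (n d₁ d₂ : ℕ) :
    (Mset n d₁ ∪ Mset n d₂).card = n / d₁ + n / d₂ - n / Nat.lcm d₁ d₂ := by
  have h := Finset.card_union_add_card_inter (Mset n d₁) (Mset n d₂)
  rw [Mset_inter, Mset_card, Mset_card, Mset_card] at h
  have := div_lcm_le n d₁ d₂
  omega

lemma degLcm_eq_sum {n : ℕ} {A : Finset ℕ} (hA : A ⊆ Finset.Icc 1 n) :
    degLcm A = ∑ d ∈ (Finset.Icc 2 n).filter (fun d => ∃ k ∈ A, d ∣ k), d.totient := by
  have hmem : ∀ k ∈ A, 1 ≤ k ∧ k ≤ n := by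
    intro k hk; simpa [Finset.mem_Icc] using hA hk
  have hD : (Finset.Icc 2 n).filter (fun d => ∃ k ∈ A, d ∣ k)
      = (A.biUnion Nat.divisors).erase 1 := by
    ext d
    simp only [Finset.mem_filter, Finset.mem_Icc, Finset.mem_erase, Finset.mem_biUnion,
      Nat.mem_divisors]
    constructor
    · rintro ⟨⟨h2, hn⟩, k, hk, hdk⟩
      exact ⟨by omega, k, hk, hdk, by have := hmem k hk; omega⟩
    · rintro ⟨h1, k, hk, hdk, hk0⟩
      have hk' := hmem k hk
      have hd0 : d ≠ 0 := by rintro rfl; exact hk0 (zero_dvd_iff.mp hdk)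
      exact ⟨⟨by omega, le_trans (Nat.le_of_dvd (by omega) hdk) hk'.2⟩, k, hk, hdk⟩
  rw [hD]
  set D := (A.biUnion Nat.divisors).erase 1 with hDdef
  have key : ∀ k ∈ A, (∑ i ∈ Finset.range k, (X : ℚ[X]) ^ i)
      = ∏ d ∈ k.divisors.erase 1, cyclotomic d ℚ := fun k hk =>
    (prod_cyclotomic_eq_geom_sum (by have := hmem k hk; omega) ℚ).symm
  have hlcm : (A.lcm fun k => ∑ i ∈ Finset.range k, (X : ℚ[X]) ^ i)
      = ∏ d ∈ D, cyclotomic d ℚ := by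
    have h1 : (A.lcm fun k => ∑ i ∈ Finset.range k, (X : ℚ[X]) ^ i)
        ∣ ∏ d ∈ D, cyclotomic d ℚ := by
      apply Finset.lcm_dvd
      intro k hk
      rw [key k hk]
      apply Finset.prod_dvd_prod_of_subset
      intro d hd
      simp only [Finset.mem_erase, Nat.mem_divisors] at hd
      simp only [hDdef, Finset.mem_erase, Finset.mem_biUnion, Nat.mem_divisors]
      exact ⟨hd.1, k, hk, hd.2⟩
    have h2 : (∏ d ∈ D, cyclotomic d ℚ)
        ∣ A.lcm fun k => ∑ i ∈ Finset.range k, (X : ℚ[X]) ^ i := by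
      apply Finset.prod_dvd_of_coprime
      · intro d hd e he hde
        exact cyclotomic.isCoprime_rat hde
      · intro d hd
        simp only [hDdef, Finset.mem_erase, Finset.mem_biUnion, Nat.mem_divisors] at hd
        obtain ⟨hd1, k, hk, hdk, hk0⟩ := hd
        refine dvd_trans ?_ (Finset.dvd_lcm hk)
        rw [key k hk]
        exact Finset.dvd_prod_of_mem _ (by simp [Finset.mem_erase, Nat.mem_divisors, hd1, hdk, hk0])
    have hmonic : (∏ d ∈ D, cyclotomic d ℚ).Monic :=
      monic_prod_of_monic _ _ fun d _ => cyclotomic.monic d ℚ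
    rw [← Finset.normalize_lcm, normalize_eq_normalize h1 h2, hmonic.normalize_eq_self]
  rw [degLcm, hlcm, natDegree_prod _ _ fun d _ => cyclotomic_ne_zero d ℚ]
  exact Finset.sum_congr rfl fun d _ => natDegree_cyclotomic d ℚ

lemma sum_prob_ind (n : ℕ) (α : ℝ) {S : Finset ℕ} (hS : S ⊆ Finset.Icc 1 n) :
    ∑ A ∈ (Finset.Icc 1 n).powerset, prob n α A * (if A ∩ S = ∅ then (1:ℝ) else 0)
      = (1 - α) ^ S.card := by
  have hprod := Finset.prod_add (fun k => if k ∈ S then (0:ℝ) else α)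
    (fun _ => 1 - α) (Finset.Icc 1 n)
  have hcard : (Finset.Icc 1 n).card = n := by rw [Nat.card_Icc]; omega
  have hright : ∀ A ∈ (Finset.Icc 1 n).powerset,
      (∏ i ∈ A, if i ∈ S then (0:ℝ) else α) * ∏ i ∈ Finset.Icc 1 n \ A, (1 - α)
        = prob n α A * (if A ∩ S = ∅ then (1:ℝ) else 0) := by
    intro A hA
    rw [Finset.mem_powerset] at hA
    have hsd : (Finset.Icc 1 n \ A).card = n - A.card := by
      rw [Finset.card_sdiff_of_subset hA, hcard]
    rw [Finset.prod_const, hsd]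
    by_cases h : A ∩ S = ∅
    · have : ∀ i ∈ A, (if i ∈ S then (0:ℝ) else α) = α := by
        intro i hi
        rw [if_neg]
        intro hiS
        exact Finset.notMem_empty i (h ▸ Finset.mem_inter.mpr ⟨hi, hiS⟩)
      rw [Finset.prod_congr rfl this, Finset.prod_const, if_pos h, prob]
      ring
    · obtain ⟨i, hi⟩ := Finset.nonempty_iff_ne_empty.mpr h
      rw [Finset.mem_inter] at hi
      rw [Finset.prod_eq_zero hi.1 (if_pos hi.2 : (if i ∈ S then (0:ℝ) else α) = 0), if_neg h]
      ring
  have hleft : (∏ k ∈ Finset.Icc 1 n, ((if k ∈ S then (0:ℝ) else α) + (1 - α)))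
      = (1 - α) ^ S.card := by
    have : ∀ k ∈ Finset.Icc 1 n, ((if k ∈ S then (0:ℝ) else α) + (1 - α))
        = (if k ∈ S then (1 - α) else 1) := by
      intro k _
      by_cases h : k ∈ S <;> simp [h]
    rw [Finset.prod_congr rfl this, Finset.prod_ite, Finset.prod_const, Finset.prod_const,
      one_pow, mul_one, Finset.filter_mem_eq_inter, Finset.inter_eq_right.mpr hS]
  rw [← Finset.sum_congr rfl hright, ← hprod, hleft]

lemma sum_prob_one (n : ℕ) (α : ℝ) :
    ∑ A ∈ (Finset.Icc 1 n).powerset, prob n α A = 1 := by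
  have := sum_prob_ind n α (S := ∅) (Finset.empty_subset _)
  simpa using this

lemma ind_eq (n d : ℕ) {A : Finset ℕ} (hA : A ⊆ Finset.Icc 1 n) :
    (if ∃ k ∈ A, d ∣ k then (1:ℝ) else 0)
      = 1 - (if A ∩ Mset n d = ∅ then (1:ℝ) else 0) := by
  have hiff : (∃ k ∈ A, d ∣ k) ↔ ¬(A ∩ Mset n d = ∅) := by
    rw [← ne_eq, ← Finset.nonempty_iff_ne_empty]
    constructor
    · rintro ⟨k, hk, hdk⟩
      exact ⟨k, Finset.mem_inter.mpr ⟨hk, Finset.mem_filter.mpr ⟨hA hk, hdk⟩⟩⟩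
    · rintro ⟨k, hk⟩
      rw [Finset.mem_inter, Mset, Finset.mem_filter] at hk
      exact ⟨k, hk.1, hk.2.2⟩
  by_cases h : A ∩ Mset n d = ∅ <;> simp [h, hiff]

lemma E_I (n : ℕ) (α : ℝ) (d : ℕ) :
    ∑ A ∈ (Finset.Icc 1 n).powerset, prob n α A * (if ∃ k ∈ A, d ∣ k then (1:ℝ) else 0)
      = 1 - (1 - α) ^ (n / d) := by
  have key : ∀ A ∈ (Finset.Icc 1 n).powerset,
      prob n α A * (if ∃ k ∈ A, d ∣ k then (1:ℝ) else 0)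
        = prob n α A - prob n α A * (if A ∩ Mset n d = ∅ then (1:ℝ) else 0) := by
    intro A hA
    rw [ind_eq n d (Finset.mem_powerset.mp hA)]
    ring
  rw [Finset.sum_congr rfl key, Finset.sum_sub_distrib, sum_prob_one,
    sum_prob_ind n α (Mset_subset n d), Mset_card]

lemma E_II (n : ℕ) (α : ℝ) (d₁ d₂ : ℕ) :
    ∑ A ∈ (Finset.Icc 1 n).powerset, prob n α A *
        ((if ∃ k ∈ A, d₁ ∣ k then (1:ℝ) else 0) * (if ∃ k ∈ A, d₂ ∣ k then (1:ℝ) else 0))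
      = 1 - (1 - α) ^ (n / d₁) - (1 - α) ^ (n / d₂)
          + (1 - α) ^ (n / d₁ + n / d₂ - n / Nat.lcm d₁ d₂) := by
  have key : ∀ A ∈ (Finset.Icc 1 n).powerset,
      prob n α A * ((if ∃ k ∈ A, d₁ ∣ k then (1:ℝ) else 0) * (if ∃ k ∈ A, d₂ ∣ k then (1:ℝ) else 0))
        = prob n α A - prob n α A * (if A ∩ Mset n d₁ = ∅ then (1:ℝ) else 0)
            - prob n α A * (if A ∩ Mset n d₂ = ∅ then (1:ℝ) else 0)
            + prob n α A * (if A ∩ (Mset n d₁ ∪ Mset n d₂) = ∅ then (1:ℝ) else 0) := by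
    intro A hA
    have hA' := Finset.mem_powerset.mp hA
    rw [ind_eq n d₁ hA', ind_eq n d₂ hA']
    have h12 : (if A ∩ (Mset n d₁ ∪ Mset n d₂) = ∅ then (1:ℝ) else 0)
        = (if A ∩ Mset n d₁ = ∅ then (1:ℝ) else 0) * (if A ∩ Mset n d₂ = ∅ then (1:ℝ) else 0) := by
      by_cases h1 : A ∩ Mset n d₁ = ∅ <;> by_cases h2 : A ∩ Mset n d₂ = ∅ <;>
        simp [Finset.inter_union_distrib_left, Finset.union_eq_empty, h1, h2]
    rw [h12]
    ring
  rw [Finset.sum_congr rfl key, Finset.sum_add_distrib, Finset.sum_sub_distrib,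
    Finset.sum_sub_distrib, sum_prob_one, sum_prob_ind n α (Mset_subset n d₁),
    sum_prob_ind n α (Mset_subset n d₂),
    sum_prob_ind n α (Finset.union_subset (Mset_subset n d₁) (Mset_subset n d₂)),
    Mset_card, Mset_card, Mset_union_card]

/-- The exact formula for the variance of `X = deg lcm([A]_q)` in the model `B(n,α)`. -/
theorem variance_degLcm (n : ℕ) (α : ℝ) (hα0 : 0 ≤ α) (hα1 : α ≤ 1) :
    (∑ A ∈ (Finset.Icc 1 n).powerset, prob n α A * (degLcm A : ℝ) ^ 2)
      - (∑ A ∈ (Finset.Icc 1 n).powerset, prob n α A * (degLcm A : ℝ)) ^ 2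
    = ∑ d₁ ∈ Finset.Icc 2 n, ∑ d₂ ∈ Finset.Icc 2 n,
        (Nat.totient d₁ : ℝ) * (Nat.totient d₂ : ℝ) *
          (1 - α) ^ (n / d₁ + n / d₂ - n / Nat.lcm d₁ d₂) *
          (1 - (1 - α) ^ (n / Nat.lcm d₁ d₂)) := by
  have hdeg : ∀ A ∈ (Finset.Icc 1 n).powerset, (degLcm A : ℝ)
      = ∑ d ∈ Finset.Icc 2 n, (Nat.totient d : ℝ) * (if ∃ k ∈ A, d ∣ k then (1:ℝ) else 0) := by
    intro A hA
    rw [degLcm_eq_sum (Finset.mem_powerset.mp hA), Nat.cast_sum, Finset.sum_filter]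
    exact Finset.sum_congr rfl fun d _ => by by_cases h : ∃ k ∈ A, d ∣ k <;> simp [h]
  have hE2 : ∑ A ∈ (Finset.Icc 1 n).powerset, prob n α A * (degLcm A : ℝ) ^ 2
      = ∑ d₁ ∈ Finset.Icc 2 n, ∑ d₂ ∈ Finset.Icc 2 n,
          (Nat.totient d₁ : ℝ) * (Nat.totient d₂ : ℝ) *
            ∑ A ∈ (Finset.Icc 1 n).powerset, prob n α A *
              ((if ∃ k ∈ A, d₁ ∣ k then (1:ℝ) else 0) * (if ∃ k ∈ A, d₂ ∣ k then (1:ℝ) else 0)) := by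
    calc ∑ A ∈ (Finset.Icc 1 n).powerset, prob n α A * (degLcm A : ℝ) ^ 2
        = ∑ A ∈ (Finset.Icc 1 n).powerset, ∑ d₁ ∈ Finset.Icc 2 n, ∑ d₂ ∈ Finset.Icc 2 n,
            (Nat.totient d₁ : ℝ) * (Nat.totient d₂ : ℝ) * (prob n α A *
              ((if ∃ k ∈ A, d₁ ∣ k then (1:ℝ) else 0) * (if ∃ k ∈ A, d₂ ∣ k then (1:ℝ) else 0))) := by
          refine Finset.sum_congr rfl fun A hA => ?_
          rw [hdeg A hA, sq, Finset.sum_mul_sum, Finset.mul_sum]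
          refine Finset.sum_congr rfl fun d₁ _ => ?_
          rw [Finset.mul_sum]
          exact Finset.sum_congr rfl fun d₂ _ => by ring
      _ = _ := by
          rw [Finset.sum_comm]
          refine Finset.sum_congr rfl fun d₁ _ => ?_
          rw [Finset.sum_comm]
          refine Finset.sum_congr rfl fun d₂ _ => ?_
          rw [← Finset.mul_sum]
  have hE1 : ∑ A ∈ (Finset.Icc 1 n).powerset, prob n α A * (degLcm A : ℝ)
      = ∑ d ∈ Finset.Icc 2 n, (Nat.totient d : ℝ) * (1 - (1 - α) ^ (n / d)) := by
    calc ∑ A ∈ (Finset.Icc 1 n).powerset, prob n α A * (degLcm A : ℝ)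
        = ∑ A ∈ (Finset.Icc 1 n).powerset, ∑ d ∈ Finset.Icc 2 n,
            (Nat.totient d : ℝ) * (prob n α A * (if ∃ k ∈ A, d ∣ k then (1:ℝ) else 0)) := by
          refine Finset.sum_congr rfl fun A hA => ?_
          rw [hdeg A hA, Finset.mul_sum]
          exact Finset.sum_congr rfl fun d _ => by ring
      _ = _ := by
          rw [Finset.sum_comm]
          refine Finset.sum_congr rfl fun d _ => ?_
          rw [← Finset.mul_sum, E_I]
  rw [hE2, hE1, sq, Finset.sum_mul_sum, ← Finset.sum_sub_distrib]
  refine Finset.sum_congr rfl fun d₁ hd₁ => ?_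
  rw [← Finset.sum_sub_distrib]
  refine Finset.sum_congr rfl fun d₂ hd₂ => ?_
  rw [E_II]
  have hc : n / Nat.lcm d₁ d₂ ≤ n / d₁ := div_lcm_le n d₁ d₂
  have hβ : (1 - α) ^ (n / d₁ + n / d₂ - n / Nat.lcm d₁ d₂) * (1 - α) ^ (n / Nat.lcm d₁ d₂)
      = (1 - α) ^ (n / d₁) * (1 - α) ^ (n / d₂) := by
    rw [← pow_add, ← pow_add]
    congr 1
    generalize n / Nat.lcm d₁ d₂ = c at *
    generalize n / d₁ = a at *
    generalize n / d₂ = b at *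
    omega
  linear_combination ((Nat.totient d₁ : ℝ) * (Nat.totient d₂ : ℝ)) * hβ
end

section
/- Let A be a random subset of {1,…,n} with independent inclusion probability α ∈ [0,1], and X = deg lcm([A]_q). Then V[X] ≪ α n³, with an absolute implied constant. -/
/-!
`A ↦ deg lcm([A]_q)` changes by at most `n` when one element of `{1,…,n}` is added, since
`[k]_q` has degree `k - 1 < n` and `lcm` is monotone and subadditive in degree. For a function of
a Bernoulli(α) random subset of an `n`-element set with differences bounded by `L`, conditioning
on one coordinate gives `V ≤ n α (1 - α) L²` (Efron–Stein), hence `V[X] ≤ α n³`.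
-/

open Polynomial

open Finset

section SubsetMean

variable {ι : Type*}

/-- Expectation of `f` over a random subset of `S` containing each element independently with
probability `α`. -/
noncomputable def subsetMean (α : ℝ) (S : Finset ι) (f : Finset ι → ℝ) : ℝ :=
  ∑ A ∈ S.powerset, α ^ #A * (1 - α) ^ (#S - #A) * f A

theorem subsetMean_sub (α : ℝ) (S : Finset ι) (f g : Finset ι → ℝ) :
    subsetMean α S f - subsetMean α S g = subsetMean α S (fun A => f A - g A) := by
  simp only [subsetMean, ← sum_sub_distrib, mul_sub]

theorem subsetMean_mono {α : ℝ} (hα₀ : 0 ≤ α) (hα₁ : α ≤ 1) {S : Finset ι}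
    {f g : Finset ι → ℝ} (hfg : ∀ A ⊆ S, f A ≤ g A) :
    subsetMean α S f ≤ subsetMean α S g :=
  sum_le_sum fun A hA => mul_le_mul_of_nonneg_left (hfg A (mem_powerset.mp hA)) <|
    mul_nonneg (pow_nonneg hα₀ _) (pow_nonneg (sub_nonneg.mpr hα₁) _)

variable [DecidableEq ι]

theorem subsetMean_insert (α : ℝ) {m : ι} {S : Finset ι} (hm : m ∉ S) (f : Finset ι → ℝ) :
    subsetMean α (insert m S) f
      = (1 - α) * subsetMean α S f + α * subsetMean α S (fun A => f (insert m A)) := by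
  rw [subsetMean, sum_powerset_insert hm, subsetMean, subsetMean, mul_sum, mul_sum,
    card_insert_of_notMem hm]
  congr 1
  · refine sum_congr rfl fun A hA => ?_
    rw [Nat.sub_add_comm (card_le_card (mem_powerset.mp hA)), pow_succ]
    ring
  · refine sum_congr rfl fun A hA => ?_
    rw [card_insert_of_notMem fun h => hm (mem_powerset.mp hA h), Nat.add_sub_add_right]
    ring

theorem subsetMean_const (α c : ℝ) (S : Finset ι) : subsetMean α S (fun _ => c) = c := by
  induction S using Finset.induction_on with
  | empty => simp [subsetMean]
  | insert m S hm ih => simp only [subsetMean_insert α hm, ih]; ring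

theorem abs_subsetMean_le {α : ℝ} (hα₀ : 0 ≤ α) (hα₁ : α ≤ 1) {L : ℝ} {S : Finset ι}
    {f : Finset ι → ℝ} (hf : ∀ A ⊆ S, |f A| ≤ L) : |subsetMean α S f| ≤ L := by
  rw [abs_le]
  constructor
  · simpa only [subsetMean_const] using
      subsetMean_mono hα₀ hα₁ (g := f) (f := fun _ => -L) fun A hA => (abs_le.mp (hf A hA)).1
  · simpa only [subsetMean_const] using
      subsetMean_mono hα₀ hα₁ (g := fun _ => L) fun A hA => (abs_le.mp (hf A hA)).2

/-- Efron–Stein inequality for a function with bounded differences. -/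
theorem subsetMean_sq_sub_sq_le {α : ℝ} (hα₀ : 0 ≤ α) (hα₁ : α ≤ 1) {L : ℝ} (S : Finset ι)
    {f : Finset ι → ℝ}
    (hf : ∀ k ∈ S, ∀ A ⊆ S, |f (insert k A) - f A| ≤ L) :
    subsetMean α S (fun A => f A ^ 2) - subsetMean α S f ^ 2 ≤ #S * (α * (1 - α) * L ^ 2) := by
  induction S using Finset.induction_on generalizing f with
  | empty => simp [subsetMean]
  | insert m S hm ih =>
    have hS : S ⊆ insert m S := subset_insert m S
    have var₀ := ih fun k hk A hA => hf k (hS hk) A (hA.trans hS)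
    have var₁ := ih (f := fun A => f (insert m A)) fun k hk A hA => by
      simpa only [insert_comm k m] using hf k (hS hk) (insert m A) (insert_subset_insert m hA)
    have gap : |subsetMean α S f - subsetMean α S (fun A => f (insert m A))| ≤ L := by
      rw [subsetMean_sub]
      refine abs_subsetMean_le hα₀ hα₁ fun A hA => ?_
      rw [abs_sub_comm]
      exact hf m (mem_insert_self m S) A (hA.trans hS)
    set e₀ := subsetMean α S f
    set e₁ := subsetMean α S (fun A => f (insert m A))
    -- total variance = mean of the conditional variances + variance of the conditional means
    have decomposition :
        subsetMean α (insert m S) (fun A => f A ^ 2) - subsetMean α (insert m S) f ^ 2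
          = (1 - α) * (subsetMean α S (fun A => f A ^ 2) - e₀ ^ 2)
            + α * (subsetMean α S (fun A => f (insert m A) ^ 2) - e₁ ^ 2)
            + α * (1 - α) * (e₀ - e₁) ^ 2 := by
      rw [subsetMean_insert α hm, subsetMean_insert α hm f]
      ring
    have hβ : 0 ≤ 1 - α := sub_nonneg.mpr hα₁
    have gap_sq : (e₀ - e₁) ^ 2 ≤ L ^ 2 := sq_le_sq' (abs_le.mp gap).1 (abs_le.mp gap).2
    rw [decomposition, card_insert_of_notMem hm, Nat.cast_succ]
    nlinarith [mul_le_mul_of_nonneg_left var₀ hβ, mul_le_mul_of_nonneg_left var₁ hα₀,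
      mul_le_mul_of_nonneg_left gap_sq (mul_nonneg hα₀ hβ)]

end SubsetMean

theorem sum_prob_mul_eq_subsetMean (n : ℕ) (α : ℝ) (f : Finset ℕ → ℝ) :
    ∑ A ∈ (Icc 1 n).powerset, prob n α A * f A = subsetMean α (Icc 1 n) f := by
  simp only [subsetMean, prob, Nat.card_Icc, Nat.add_sub_cancel]

theorem geom_sum_X_ne_zero {R : Type*} [CommSemiring R] [CharZero R] {k : ℕ}
    (hk : k ≠ 0) : ∑ i ∈ range k, (X : R[X]) ^ i ≠ 0 := by
  intro h
  simpa [eval_finsetSum, hk] using congrArg (eval 1) h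

theorem natDegree_geom_sum_X_lt {R : Type*} [Semiring R] {k : ℕ} (hk : k ≠ 0) :
    (∑ i ∈ range k, (X : R[X]) ^ i).natDegree < k :=
  Nat.lt_of_le_pred (Nat.pos_of_ne_zero hk) <| natDegree_sum_le_of_forall_le _ _ fun i hi =>
    (natDegree_X_pow_le i).trans (Nat.le_pred_of_lt (mem_range.mp hi))

theorem natDegree_lcm_insert_le {K ι : Type*} [Field K] [DecidableEq K] [DecidableEq ι]
    {g : ι → K[X]} {k : ι} {A : Finset ι} (hk : g k ≠ 0) (hA : A.lcm g ≠ 0) :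
    ((insert k A).lcm g).natDegree ≤ (g k).natDegree + (A.lcm g).natDegree := by
  rw [← natDegree_mul hk hA, lcm_insert]
  exact natDegree_le_of_dvd (lcm_dvd (dvd_mul_right _ _) (dvd_mul_left _ _)) (mul_ne_zero hk hA)

theorem natDegree_lcm_le_lcm_insert {K ι : Type*} [Field K] [DecidableEq K] [DecidableEq ι]
    {g : ι → K[X]} (k : ι) {A : Finset ι} (hA : (insert k A).lcm g ≠ 0) :
    (A.lcm g).natDegree ≤ ((insert k A).lcm g).natDegree :=
  natDegree_le_of_dvd (lcm_mono (subset_insert k A)) hA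

theorem abs_degLcm_insert_sub_le {n k : ℕ} (hk : k ∈ Icc 1 n) {A : Finset ℕ} (hA : A ⊆ Icc 1 n) :
    |(degLcm (insert k A) : ℝ) - degLcm A| ≤ n := by
  have ne_zero : ∀ B ⊆ Icc 1 n, (B.lcm fun k => ∑ i ∈ range k, (X : ℚ[X]) ^ i) ≠ 0 :=
    fun B hB => lcm_ne_zero_iff.mpr fun j hj =>
      geom_sum_X_ne_zero (Nat.one_le_iff_ne_zero.mp (mem_Icc.mp (hB hj)).1)
  have hk₀ : k ≠ 0 := Nat.one_le_iff_ne_zero.mp (mem_Icc.mp hk).1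
  have lower := natDegree_lcm_le_lcm_insert k (ne_zero _ (insert_subset hk hA))
  have upper := natDegree_lcm_insert_le (k := k) (geom_sum_X_ne_zero hk₀) (ne_zero A hA)
  have deg_k := natDegree_geom_sum_X_lt (R := ℚ) hk₀
  have hkn := (mem_Icc.mp hk).2
  rw [degLcm, degLcm, ← Nat.cast_sub lower, Nat.abs_cast]
  exact_mod_cast (by omega)

/-- `V[deg lcm([A]_q)] ≪ α n³` with an absolute implied constant. -/
theorem variance_degLcm_le : ∃ C : ℝ, 0 < C ∧
    ∀ n : ℕ, ∀ α : ℝ, 0 ≤ α → α ≤ 1 →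
      (∑ A ∈ (Finset.Icc 1 n).powerset, prob n α A * (degLcm A : ℝ) ^ 2)
        - (∑ A ∈ (Finset.Icc 1 n).powerset, prob n α A * (degLcm A : ℝ)) ^ 2
      ≤ C * α * (n : ℝ) ^ 3 := by
  refine ⟨1, one_pos, fun n α hα₀ hα₁ => ?_⟩
  rw [sum_prob_mul_eq_subsetMean, sum_prob_mul_eq_subsetMean]
  have efronStein := subsetMean_sq_sub_sq_le hα₀ hα₁ (Icc 1 n) (L := n)
    (f := fun A => (degLcm A : ℝ)) fun k hk A hA => abs_degLcm_insert_sub_le hk hA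
  rw [Nat.card_Icc, Nat.add_sub_cancel] at efronStein
  refine efronStein.trans ?_
  have hn : (0 : ℝ) ≤ n ^ 3 := by positivity
  nlinarith [mul_nonneg hα₀ hα₀]
end
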